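/- Let d ≥ 1, let ρ: ℝ^d → (0,∞) be a positive function, let 1 < p < q < ∞, 0 < θ < ∞, set p' = p/(p−1) and t' = 1 + p'/q. If a weight w belongs to A^{ρ,θ}_{p,q}, then w^{−p'} belongs to A^{ρ,θ·(1/q+1/p')^{-1}}_{t'}, i.e. there is C > 0 such that for every ball B = B(x_0,r): ((1/|B|)∫_B w(x)^{−p'} dx)^{1/t'} ((1/|B|)∫_B w(x)^{p' t/t'} dx)^{1/t} ≤ C (1 + r/ρ(x_0))^{θ·(1/q+1/p')^{-1}}, where t = t'/(t'−1). -/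

import Mathlib

open Metric MeasureTheory

/-- if `w ∈ A^{ρ,θ}_{p,q}` with `1 < p < q < ∞`, then
`w^{-p'} ∈ A^{ρ,θ·(1/q+1/p')⁻¹}_{t'}` with `t' = 1 + p'/q`, `p' = p/(p-1)`,
`t = t'/(t'-1)`. -/
theorem stmt5 {d : ℕ} (hd : 1 ≤ d) (ρ : EuclideanSpace ℝ (Fin d) → ℝ)
    (hρ : ∀ x, 0 < ρ x) (p q θ : ℝ) (hp : 1 < p) (hpq : p < q) (hθ : 0 < θ)
    (p' t t' : ℝ) (hp' : p' = p / (p - 1)) (ht' : t' = 1 + p' / q) (ht : t = t' / (t' - 1))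
    (w : EuclideanSpace ℝ (Fin d) → ℝ) (hw : ∀ x, 0 ≤ w x)
    (hwloc : LocallyIntegrable w volume)
    (hApq : ∃ C > 0, ∀ (x₀ : EuclideanSpace ℝ (Fin d)) (r : ℝ), 0 < r →
      ((volume (ball x₀ r)).toReal⁻¹ * ∫ x in ball x₀ r, w x ^ q) ^ (1 / q) *
          ((volume (ball x₀ r)).toReal⁻¹ * ∫ x in ball x₀ r, w x ^ (-p')) ^ (1 / p')
        ≤ C * (1 + r / ρ x₀) ^ θ) :
    ∃ C > 0, ∀ (x₀ : EuclideanSpace ℝ (Fin d)) (r : ℝ), 0 < r →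
      ((volume (ball x₀ r)).toReal⁻¹ * ∫ x in ball x₀ r, w x ^ (-p')) ^ (1 / t') *
          ((volume (ball x₀ r)).toReal⁻¹ * ∫ x in ball x₀ r, w x ^ (p' * t / t')) ^ (1 / t)
        ≤ C * (1 + r / ρ x₀) ^ (θ * (1 / q + 1 / p')⁻¹) := by
  obtain ⟨C, hC, h⟩ := hApq
  have hq0 : 0 < q := lt_trans (lt_trans one_pos hp) hpq
  have hp'0 : 0 < p' := by
    rw [hp']; exact div_pos (lt_trans one_pos hp) (by linarith)
  have ht'1 : 1 < t' := by
    rw [ht']; nlinarith [div_pos hp'0 hq0]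
  have ht'0 : 0 < t' := lt_trans one_pos ht'1
  have hpt : p' * t / t' = q := by
    rw [ht, ht']; field_simp
    rw [show q + p' - q = p' by ring, div_self hp'0.ne']
  have e2 : 1 / q * (p' / t') = 1 / t := by
    rw [ht, ht']; field_simp
    ring
  have e3 : 1 / p' * (p' / t') = 1 / t' := by
    field_simp
  have e4 : θ * (p' / t') = θ * (1 / q + 1 / p')⁻¹ := by
    rw [ht']; field_simp; ring
  refine ⟨C ^ (p' / t'), Real.rpow_pos_of_pos hC _, fun x₀ r hr => ?_⟩
  have key := h x₀ r hr
  set B := ball x₀ r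
  have hτ : (0:ℝ) < 1 + r / ρ x₀ := by have := hρ x₀; positivity
  have hI : ∀ a : ℝ, 0 ≤ (volume B).toReal⁻¹ * ∫ x in B, w x ^ a := by
    intro a
    apply mul_nonneg (inv_nonneg.2 ENNReal.toReal_nonneg)
    exact integral_nonneg fun x => Real.rpow_nonneg (hw x) a
  have hexp : 0 < p' / t' := div_pos hp'0 ht'0
  have step := Real.rpow_le_rpow
    (mul_nonneg (Real.rpow_nonneg (hI q) _) (Real.rpow_nonneg (hI (-p')) _))
    key hexp.le
  rw [Real.mul_rpow (Real.rpow_nonneg (hI q) _) (Real.rpow_nonneg (hI (-p')) _),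
    ← Real.rpow_mul (hI q), ← Real.rpow_mul (hI (-p')), e2, e3,
    Real.mul_rpow hC.le (Real.rpow_nonneg hτ.le θ), ← Real.rpow_mul hτ.le, e4] at step
  rw [hpt, mul_comm]
  exact step
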